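/- For all β ≥ 0: (i) for every integer k ≥ 2, ℙ_β( 0 ∼ S_{≥k} ) ≤ β·50^d·k^{−d}, where S_{≥k} = {x ∈ ℤ^d : ‖x‖_∞ ≥ k}; and (ii) for every m ∈ ℕ_{>0}, every vertex x ∈ V_0^m, and every w ∈ ℤ^d with ‖w‖_∞ ≥ 2, ℙ_β( x ∼ V_w^m ) ≤ β·4^{2d} / ( ‖w‖_∞^{2d}·m^d ). -/

import Mathlib

/-! If some coordinate of `u - v` has absolute value at least `s + 1`, the unit cubes at `u` and
`v` are at Euclidean distance at least `s`, so the edge integral is at most `s^{-2d}` and, as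
`1 - e^{-t} ≤ t`, the edge `{u, v}` is open with probability at most `β s^{-2d}`. Both bounds
follow by a union bound. For (ii), the `m^d` points of `V_w^m` all differ from `x` by more than
`m (‖w‖_∞ - 1) ≥ m ‖w‖_∞ / 2` in one coordinate. For (i), the bound for `y` with
`‖y‖_∞ = j ≥ k` is at most `β 4^d j^{-2d} ≤ β 4^d ∏ᵢ max(|yᵢ|, k)^{-2}`, and the sum of this
product over `ℤ^d` is the `d`-th power of `∑_{n ∈ ℤ} max(|n|, k)^{-2} ≤ 7 / k`. -/

open MeasureTheory ProbabilityTheory ENNReal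

noncomputable section

/-- Configuration space of long-range percolation on `ℤ^d`:
each unordered pair of vertices carries a `Bool` (open or closed). -/
abbrev PercConfig (d : ℕ) := Sym2 (Fin d → ℤ) → Bool

/-- The sup norm `‖x‖_∞` of an integer vector, as a natural number. -/
def supNorm {d : ℕ} (x : Fin d → ℤ) : ℕ := Finset.univ.sup fun i => (x i).natAbs

/-- The Euclidean norm `‖x‖₂` of an integer vector. -/
def l2norm {d : ℕ} (x : Fin d → ℤ) : ℝ := Real.sqrt (∑ i, ((x i : ℝ)) ^ 2)

/-- The half-open unit cube `u + [0,1)^d` in `ℝ^d`. -/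
def unitCube {d : ℕ} (u : Fin d → ℤ) : Set (Fin d → ℝ) :=
  Set.univ.pi fun i => Set.Ico (u i : ℝ) ((u i : ℝ) + 1)

/-- `∫_{u+C} ∫_{v+C} ‖x−y‖₂^{−2d} dx dy` with respect to Lebesgue measure,
as an extended nonnegative real (it is `∞` exactly when `‖u−v‖_∞ ≤ 1`). -/
def edgeIntegral (d : ℕ) (u v : Fin d → ℤ) : ℝ≥0∞ :=
  ∫⁻ x in unitCube u, ∫⁻ y in unitCube v,
    ENNReal.ofReal ((Real.sqrt (∑ i, (x i - y i) ^ 2)) ^ (-(2 * (d : ℝ))))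

/-- The connection probability
`p(β,{u,v}) = 1 − exp(−β ∫_{u+C} ∫_{v+C} ‖x−y‖₂^{−2d} dx dy)`,
equal to `1` when the integral diverges. -/
def pConn (d : ℕ) (β : ℝ) (u v : Fin d → ℤ) : ℝ :=
  if edgeIntegral d u v = ⊤ then 1
  else 1 - Real.exp (-β * (edgeIntegral d u v).toReal)

/-- `P` is an independent bond percolation measure on `ℤ^d` in which each edge `{u,v}`
is open with probability `f u v`, independently over edges. -/
structure IsPercolation (d : ℕ) (f : (Fin d → ℤ) → (Fin d → ℤ) → ℝ)
    (P : Measure (PercConfig d)) : Prop where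
  isProb : IsProbabilityMeasure P
  indep : iIndepFun
    (fun (e : Sym2 (Fin d → ℤ)) (ω : PercConfig d) => ω e) P
  openProb : ∀ u v : Fin d → ℤ, u ≠ v →
    P {ω | ω s(u, v) = true} = ENNReal.ofReal (f u v)

/-- `P` is the long-range percolation measure `ℙ_β` on `ℤ^d`. -/
def IsLRP (d : ℕ) (β : ℝ) (P : Measure (PercConfig d)) : Prop :=
  IsPercolation d (pConn d β) P

/-- The graph distance `D_A(x,y)` inside `A ⊆ ℤ^d`, using only open edges with both
endpoints in `A`; it is `∞` if there is no such path. -/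
def graphDist {d : ℕ} (ω : PercConfig d) (A : Set (Fin d → ℤ))
    (x y : Fin d → ℤ) : ℕ∞ :=
  sInf {n : ℕ∞ | ∃ m : ℕ, n = m ∧ ∃ γ : ℕ → Fin d → ℤ,
    γ 0 = x ∧ γ m = y ∧ (∀ i ≤ m, γ i ∈ A) ∧
    ∀ i < m, γ i ≠ γ (i + 1) ∧ ω s(γ i, γ (i + 1)) = true}

/-- The box `V_u^n = n·u + {0,…,n−1}^d`. -/
def latticeBox (d : ℕ) (u : Fin d → ℤ) (n : ℕ) : Set (Fin d → ℤ) :=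
  {x | ∀ i, (n : ℤ) * u i ≤ x i ∧ x i < (n : ℤ) * u i + (n : ℤ)}

/-- The box `{0,…,n−1}^d`. -/
def stdBox (d : ℕ) (n : ℕ) : Set (Fin d → ℤ) := latticeBox d 0 n

/-- The expected graph distance `𝔼[D_A(x,y)]`, as an extended nonnegative real. -/
def expDist {d : ℕ} (P : Measure (PercConfig d)) (A : Set (Fin d → ℤ))
    (x y : Fin d → ℤ) : ℝ≥0∞ :=
  ∫⁻ ω, (graphDist ω A x y : ℝ≥0∞) ∂P

/-- The (inner) diameter of `A`: `diam(A) = max_{x,y ∈ A} D_A(x,y)`. -/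
def diamIn {d : ℕ} (ω : PercConfig d) (A : Set (Fin d → ℤ)) : ℕ∞ :=
  ⨆ x ∈ A, ⨆ y ∈ A, graphDist ω A x y

/-- `Λ(n,β) = max_{u,v ∈ {0,…,n−1}^d} 𝔼_β[D_{V_0^n}(u,v)] + 1`, for the measure `P = ℙ_β`. -/
def Lambda (d : ℕ) (P : Measure (PercConfig d)) (n : ℕ) : ℝ≥0∞ :=
  (⨆ u ∈ stdBox d n, ⨆ v ∈ stdBox d n, expDist P (stdBox d n) u v) + 1

/-- The distance exponent `θ(β) = lim_{n→∞} log Λ(n,β)/log n = inf_{n≥2} log Λ(n,β)/log n`. -/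
def theta (d : ℕ) (P : Measure (PercConfig d)) : ℝ :=
  ⨅ n : {m : ℕ // 2 ≤ m}, Real.log (Lambda d P n.1).toReal / Real.log (n.1 : ℝ)

open Finset

lemma ENNReal.tsum_pi_prod_le {ι α : Type*} [Fintype ι] (f : α → ℝ≥0∞) :
    ∑' y : ι → α, ∏ i, f (y i) ≤ (∑' a, f a) ^ Fintype.card ι := by
  classical
  refine ENNReal.summable.tsum_le_of_sum_le fun s => ?_
  -- every finite set of points lies in a product of finite sets of coordinates
  set T : Finset α := s.biUnion fun y => univ.image y
  have hsT : s ⊆ Fintype.piFinset fun _ => T := fun y hy =>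
    Fintype.mem_piFinset.mpr fun i => mem_biUnion.mpr ⟨y, hy, mem_image_of_mem y (mem_univ i)⟩
  calc ∑ y ∈ s, ∏ i, f (y i)
      ≤ ∑ y ∈ Fintype.piFinset fun _ => T, ∏ i, f (y i) := sum_le_sum_of_subset hsT
    _ = (∑ a ∈ T, f a) ^ Fintype.card ι := by rw [← prod_univ_sum, prod_const, card_univ]
    _ ≤ (∑' a, f a) ^ Fintype.card ι := by gcongr; exact ENNReal.sum_le_tsum T

section

variable {d : ℕ}

lemma natAbs_le_supNorm (x : Fin d → ℤ) (i : Fin d) : (x i).natAbs ≤ supNorm x :=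
  Finset.le_sup (f := fun i => (x i).natAbs) (mem_univ i)

lemma exists_natAbs_eq_supNorm {x : Fin d → ℤ} (hx : supNorm x ≠ 0) :
    ∃ i, (x i).natAbs = supNorm x := by
  have hne : (univ : Finset (Fin d)).Nonempty := by
    by_contra h
    simp [supNorm, not_nonempty_iff_eq_empty.mp h] at hx
  obtain ⟨i, -, hi⟩ := exists_mem_eq_sup _ hne fun i => (x i).natAbs
  exact ⟨i, hi.symm⟩

def latticeBoxFinset (d : ℕ) (u : Fin d → ℤ) (n : ℕ) : Finset (Fin d → ℤ) :=
  Fintype.piFinset fun i => Ico ((n : ℤ) * u i) ((n : ℤ) * u i + n)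

lemma coe_latticeBoxFinset (u : Fin d → ℤ) (n : ℕ) :
    (latticeBoxFinset d u n : Set (Fin d → ℤ)) = latticeBox d u n := by
  ext x
  simp [latticeBoxFinset, latticeBox]

lemma card_latticeBoxFinset (u : Fin d → ℤ) (n : ℕ) : #(latticeBoxFinset d u n) = n ^ d := by
  simp [latticeBoxFinset, Fintype.card_piFinset]

lemma le_abs_sub_of_mem_latticeBox {u v x y : Fin d → ℤ} {n : ℕ} (hx : x ∈ latticeBox d u n)
    (hy : y ∈ latticeBox d v n) (i : Fin d) :
    (n : ℤ) * (|u i - v i| - 1) + 1 ≤ |x i - y i| := by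
  obtain ⟨hx₁, hx₂⟩ := hx i
  obtain ⟨hy₁, hy₂⟩ := hy i
  rcases abs_cases (u i - v i) with ⟨h, -⟩ | ⟨h, -⟩ <;> rw [h]
  · exact le_abs.mpr (Or.inl (by linarith))
  · exact le_abs.mpr (Or.inr (by linarith))

lemma volume_unitCube (u : Fin d → ℤ) : volume (unitCube u) = 1 := by
  simp [unitCube, volume_pi_pi, Real.volume_Ico]

lemma abs_sub_lt_of_mem_unitCube {u v : Fin d → ℤ} {x y : Fin d → ℝ}
    (hx : x ∈ unitCube u) (hy : y ∈ unitCube v) (i : Fin d) :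
    |(u i : ℝ) - v i| < |x i - y i| + 1 := by
  obtain ⟨hx₁, hx₂⟩ := hx i (Set.mem_univ i)
  obtain ⟨hy₁, hy₂⟩ := hy i (Set.mem_univ i)
  have hdiff : |((u i : ℝ) - v i) - (x i - y i)| < 1 := abs_lt.mpr ⟨by linarith, by linarith⟩
  linarith [abs_sub_abs_le_abs_sub ((u i : ℝ) - v i) (x i - y i)]

lemma edgeIntegral_le {u v : Fin d → ℤ} {s : ℝ} (hs : 0 < s) (i : Fin d)
    (hi : s + 1 ≤ |(u i : ℝ) - v i|) :
    edgeIntegral d u v ≤ ENNReal.ofReal (s ^ (2 * d))⁻¹ := by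
  have hintegrand : ∀ x ∈ unitCube u, ∀ y ∈ unitCube v,
      ENNReal.ofReal ((Real.sqrt (∑ j, (x j - y j) ^ 2)) ^ (-(2 * (d : ℝ))))
        ≤ ENNReal.ofReal (s ^ (2 * d))⁻¹ := by
    intro x hx y hy
    have hsx : s ≤ Real.sqrt (∑ j, (x j - y j) ^ 2) := by
      have hcoord := abs_sub_lt_of_mem_unitCube hx hy i
      refine (le_abs_self s).trans (Real.abs_le_sqrt ?_)
      calc s ^ 2 ≤ (x i - y i) ^ 2 := by nlinarith [sq_abs (x i - y i), abs_nonneg (x i - y i)]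
        _ ≤ ∑ j, (x j - y j) ^ 2 :=
          single_le_sum (f := fun j => (x j - y j) ^ 2) (fun j _ => sq_nonneg _) (mem_univ i)
    refine ENNReal.ofReal_le_ofReal ?_
    calc Real.sqrt (∑ j, (x j - y j) ^ 2) ^ (-(2 * (d : ℝ)))
        ≤ s ^ (-(2 * (d : ℝ))) :=
          Real.rpow_le_rpow_of_nonpos hs hsx (neg_nonpos.mpr (by positivity))
      _ = (s ^ (2 * d))⁻¹ := by
        rw [Real.rpow_neg hs.le, ← Real.rpow_natCast]
        push_cast
        ring_nf
  calc edgeIntegral d u v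
      ≤ ∫⁻ _ in unitCube u, ∫⁻ _ in unitCube v, ENNReal.ofReal (s ^ (2 * d))⁻¹ :=
        setLIntegral_mono measurable_const fun x hx =>
          setLIntegral_mono measurable_const fun y hy => hintegrand x hx y hy
    _ = ENNReal.ofReal (s ^ (2 * d))⁻¹ := by simp [volume_unitCube]

lemma ofReal_pConn_le {β c : ℝ} (hβ : 0 ≤ β) (hc : 0 ≤ c) {u v : Fin d → ℤ}
    (h : edgeIntegral d u v ≤ ENNReal.ofReal c) :
    ENNReal.ofReal (pConn d β u v) ≤ ENNReal.ofReal (β * c) := by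
  have hfin : edgeIntegral d u v ≠ ⊤ := ne_top_of_le_ne_top ENNReal.ofReal_ne_top h
  rw [pConn, if_neg hfin]
  refine ENNReal.ofReal_le_ofReal ?_
  have ht : (edgeIntegral d u v).toReal ≤ c := ENNReal.toReal_le_of_le_ofReal hc h
  linarith [Real.add_one_le_exp (-β * (edgeIntegral d u v).toReal),
    mul_le_mul_of_nonneg_left ht hβ]

lemma sum_range_inv_sq_max_le (k N : ℕ) :
    ∑ n ∈ range N, (((max n k : ℕ) : ℝ) ^ 2)⁻¹ ≤ (k + 1) / k ^ 2 + 2 / (k + 1) := by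
  rw [← sum_filter_add_sum_filter_not _ (· ≤ k)]
  gcongr
  · calc ∑ n ∈ (range N).filter (· ≤ k), (((max n k : ℕ) : ℝ) ^ 2)⁻¹
        = ∑ _n ∈ (range N).filter (· ≤ k), ((k : ℝ) ^ 2)⁻¹ :=
          sum_congr rfl fun n hn => by rw [max_eq_right (mem_filter.mp hn).2]
      _ ≤ ∑ _n ∈ range (k + 1), ((k : ℝ) ^ 2)⁻¹ :=
          sum_le_sum_of_subset_of_nonneg (fun n hn => by simp at hn ⊢; omega)
            (fun _ _ _ => by positivity)
      _ = (k + 1) / k ^ 2 := by simp [div_eq_mul_inv]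
  · calc ∑ n ∈ (range N).filter (¬ · ≤ k), (((max n k : ℕ) : ℝ) ^ 2)⁻¹
        = ∑ n ∈ (range N).filter (¬ · ≤ k), ((n : ℝ) ^ 2)⁻¹ :=
          sum_congr rfl fun n hn => by rw [max_eq_left (not_le.mp (mem_filter.mp hn).2).le]
      _ ≤ ∑ n ∈ Ioo k N, ((n : ℝ) ^ 2)⁻¹ :=
          sum_le_sum_of_subset_of_nonneg (fun n hn => by simp at hn ⊢; omega)
            (fun _ _ _ => by positivity)
      _ ≤ 2 / (k + 1) := sum_Ioo_inv_sq_le k N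

lemma tsum_int_inv_sq_max_natAbs_le (k : ℕ) (hk : 2 ≤ k) :
    ∑' n : ℤ, ENNReal.ofReal (((max n.natAbs k : ℕ) : ℝ) ^ 2)⁻¹
      ≤ ENNReal.ofReal (7 / k) := by
  set g : ℕ → ℝ≥0∞ := fun n => ENNReal.ofReal (((max n k : ℕ) : ℝ) ^ 2)⁻¹
  have hk₀ : (0 : ℝ) < k := by positivity
  have hnat : ∑' n, g n ≤ ENNReal.ofReal ((k + 1) / k ^ 2 + 2 / (k + 1)) :=
    ENNReal.tsum_le_of_sum_range_le fun N => by
      rw [← ENNReal.ofReal_sum_of_nonneg fun _ _ => by positivity]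
      exact ENNReal.ofReal_le_ofReal (sum_range_inv_sq_max_le k N)
  have hmono : ∀ n, g (n + 1) ≤ g n := fun n => ENNReal.ofReal_le_ofReal <| by
    gcongr
    exact n.le_succ
  calc ∑' n : ℤ, ENNReal.ofReal (((max n.natAbs k : ℕ) : ℝ) ^ 2)⁻¹
      = ∑' n, g n + ∑' n, g (n + 1) :=
        tsum_of_nat_of_neg_add_one ENNReal.summable ENNReal.summable
    _ ≤ ∑' n, g n + ∑' n, g n := by gcongr with n; exact hmono n
    _ ≤ ENNReal.ofReal ((k + 1) / k ^ 2 + 2 / (k + 1) + ((k + 1) / k ^ 2 + 2 / (k + 1))) := by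
        rw [ENNReal.ofReal_add (by positivity) (by positivity)]
        gcongr
    _ ≤ ENNReal.ofReal (7 / k) := by
        refine ENNReal.ofReal_le_ofReal ?_
        have hk₂ : (2 : ℝ) ≤ k := by exact_mod_cast hk
        rw [div_add_div _ _ (by positivity) (by positivity), div_add_div _ _ (by positivity)
          (by positivity), div_le_div_iff₀ (by positivity) hk₀]
        nlinarith

lemma inv_pow_supNorm_sub_one_le_prod {k : ℕ} (hk : 2 ≤ k) {y : Fin d → ℤ}
    (hky : k ≤ supNorm y) :
    (((supNorm y : ℝ) - 1) ^ (2 * d))⁻¹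
      ≤ 4 ^ d * ∏ i, (((max (y i).natAbs k : ℕ) : ℝ) ^ 2)⁻¹ := by
  have hj : (2 : ℝ) ≤ supNorm y := by exact_mod_cast hk.trans hky
  have hfactor : ∀ i,
      (((supNorm y : ℝ) - 1) ^ 2)⁻¹ ≤ 4 * (((max (y i).natAbs k : ℕ) : ℝ) ^ 2)⁻¹ := by
    intro i
    have hM : ((max (y i).natAbs k : ℕ) : ℝ) ≤ supNorm y := by
      exact_mod_cast max_le (natAbs_le_supNorm y i) hky
    have hM₀ : (0 : ℝ) < (max (y i).natAbs k : ℕ) := by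
      exact_mod_cast (by omega : 0 < max (y i).natAbs k)
    rw [← div_eq_mul_inv, inv_eq_one_div, div_le_div_iff₀ (by nlinarith) (by positivity)]
    nlinarith
  calc (((supNorm y : ℝ) - 1) ^ (2 * d))⁻¹
      = ∏ _i : Fin d, (((supNorm y : ℝ) - 1) ^ 2)⁻¹ := by simp [pow_mul]
    _ ≤ ∏ i, 4 * (((max (y i).natAbs k : ℕ) : ℝ) ^ 2)⁻¹ :=
        prod_le_prod (fun _ _ => by positivity) fun i _ => hfactor i
    _ = 4 ^ d * ∏ i, (((max (y i).natAbs k : ℕ) : ℝ) ^ 2)⁻¹ := by simp [prod_mul_distrib]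

variable {β : ℝ} {P : Measure (PercConfig d)}

lemma IsLRP.measure_open_le (hP : IsLRP d β P) (hβ : 0 ≤ β) {u v : Fin d → ℤ} {s : ℝ}
    (hs : 0 < s) (i : Fin d) (hi : s + 1 ≤ |(u i : ℝ) - v i|) :
    P {ω | ω s(u, v) = true} ≤ ENNReal.ofReal (β / s ^ (2 * d)) := by
  have huv : u ≠ v := by
    rintro rfl
    simp at hi
    linarith
  rw [hP.openProb u v huv, div_eq_mul_inv]
  exact ofReal_pConn_le hβ (by positivity) (edgeIntegral_le hs i hi)

lemma IsLRP.measure_open_far_le_prod (hP : IsLRP d β P) (hβ : 0 ≤ β) {k : ℕ} (hk : 2 ≤ k)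
    (y : Fin d → ℤ) :
    P {ω | k ≤ supNorm y ∧ ω s(0, y) = true}
      ≤ ENNReal.ofReal (β * 4 ^ d)
        * ∏ i, ENNReal.ofReal (((max (y i).natAbs k : ℕ) : ℝ) ^ 2)⁻¹ := by
  by_cases hky : k ≤ supNorm y
  · obtain ⟨i, hi⟩ := exists_natAbs_eq_supNorm (by omega : supNorm y ≠ 0)
    have hj : (2 : ℝ) ≤ supNorm y := by exact_mod_cast hk.trans hky
    have hdist : ((supNorm y : ℝ) - 1) + 1 ≤ |((0 : Fin d → ℤ) i : ℝ) - y i| := by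
      simp [← hi, Nat.cast_natAbs]
    calc P {ω | k ≤ supNorm y ∧ ω s(0, y) = true}
        ≤ P {ω | ω s(0, y) = true} := measure_mono fun ω h => h.2
      _ ≤ ENNReal.ofReal (β / ((supNorm y : ℝ) - 1) ^ (2 * d)) :=
        hP.measure_open_le hβ (by linarith) i hdist
      _ ≤ ENNReal.ofReal (β * 4 ^ d * ∏ i, (((max (y i).natAbs k : ℕ) : ℝ) ^ 2)⁻¹) := by
        rw [div_eq_mul_inv, mul_assoc]
        gcongr
        exact inv_pow_supNorm_sub_one_le_prod hk hky
      _ = _ := by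
        rw [ENNReal.ofReal_mul (by positivity),
          ENNReal.ofReal_prod_of_nonneg fun _ _ => by positivity]
  · simp [hky]

theorem IsLRP.measure_exists_open_edge_far_le (hP : IsLRP d β P) (hβ : 0 ≤ β) {k : ℕ}
    (hk : 2 ≤ k) :
    P {ω | ∃ y : Fin d → ℤ, k ≤ supNorm y ∧ ω s(0, y) = true}
      ≤ ENNReal.ofReal (β * 50 ^ d / (k : ℝ) ^ d) := by
  set g : ℤ → ℝ≥0∞ := fun n => ENNReal.ofReal (((max n.natAbs k : ℕ) : ℝ) ^ 2)⁻¹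
  have hsum : ∑' y : Fin d → ℤ, ∏ i, g (y i) ≤ ENNReal.ofReal (7 / k) ^ d :=
    calc ∑' y : Fin d → ℤ, ∏ i, g (y i) ≤ (∑' n, g n) ^ Fintype.card (Fin d) :=
          ENNReal.tsum_pi_prod_le g
      _ ≤ ENNReal.ofReal (7 / k) ^ d := by
          rw [Fintype.card_fin]
          gcongr
          exact tsum_int_inv_sq_max_natAbs_le k hk
  calc P {ω | ∃ y : Fin d → ℤ, k ≤ supNorm y ∧ ω s(0, y) = true}
      ≤ ∑' y : Fin d → ℤ, P {ω | k ≤ supNorm y ∧ ω s(0, y) = true} := by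
        rw [Set.ofPred_exists]
        exact measure_iUnion_le _
    _ ≤ ∑' y : Fin d → ℤ, ENNReal.ofReal (β * 4 ^ d) * ∏ i, g (y i) :=
        ENNReal.tsum_le_tsum (hP.measure_open_far_le_prod hβ hk)
    _ ≤ ENNReal.ofReal (β * 4 ^ d) * ENNReal.ofReal (7 / k) ^ d := by
        rw [ENNReal.tsum_mul_left]
        gcongr
    _ = ENNReal.ofReal (β * (4 * (7 / k)) ^ d) := by
        rw [← ENNReal.ofReal_pow (by positivity), ← ENNReal.ofReal_mul (by positivity),
          mul_assoc, ← mul_pow]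
    _ ≤ ENNReal.ofReal (β * 50 ^ d / (k : ℝ) ^ d) := by
        rw [mul_div_assoc, ← div_pow, mul_div_assoc']
        gcongr
        norm_num

lemma IsLRP.measure_open_to_latticeBox_le (hP : IsLRP d β P) (hβ : 0 ≤ β) {m : ℕ}
    (hm : 0 < m) {x : Fin d → ℤ} (hx : x ∈ stdBox d m) {w : Fin d → ℤ}
    (hw : 2 ≤ supNorm w) {y : Fin d → ℤ} (hy : y ∈ latticeBox d w m) :
    P {ω | ω s(x, y) = true}
      ≤ ENNReal.ofReal (β / (m * ((supNorm w : ℝ) - 1)) ^ (2 * d)) := by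
  obtain ⟨i, hi⟩ := exists_natAbs_eq_supNorm (by omega : supNorm w ≠ 0)
  have hS : (2 : ℝ) ≤ supNorm w := by exact_mod_cast hw
  have hm₀ : (0 : ℝ) < m := by exact_mod_cast hm
  refine hP.measure_open_le hβ (by nlinarith) i ?_
  have hdist := le_abs_sub_of_mem_latticeBox hx hy i
  simp only [Pi.zero_apply, zero_sub, abs_neg, Int.abs_eq_natAbs, hi] at hdist
  have hdist' : (((m * ((supNorm w : ℤ) - 1) + 1 : ℤ) : ℝ)) ≤ |(x i : ℝ) - y i| := by
    exact_mod_cast hdist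
  push_cast at hdist'
  linarith

theorem IsLRP.measure_exists_open_edge_to_latticeBox_le (hP : IsLRP d β P) (hβ : 0 ≤ β)
    {m : ℕ} (hm : 0 < m) {x : Fin d → ℤ} (hx : x ∈ stdBox d m) {w : Fin d → ℤ}
    (hw : 2 ≤ supNorm w) :
    P {ω | ∃ y ∈ latticeBox d w m, x ≠ y ∧ ω s(x, y) = true}
      ≤ ENNReal.ofReal (β * 4 ^ (2 * d) / ((supNorm w : ℝ) ^ (2 * d) * (m : ℝ) ^ d)) := by
  have hS : (2 : ℝ) ≤ supNorm w := by exact_mod_cast hw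
  set S : ℝ := (supNorm w : ℝ)
  have hm₀ : (0 : ℝ) < m := by exact_mod_cast hm
  have hedge : ∀ y ∈ latticeBoxFinset d w m,
      P {ω | ω s(x, y) = true} ≤ ENNReal.ofReal (β / (m * (S - 1)) ^ (2 * d)) := fun y hy =>
    hP.measure_open_to_latticeBox_le hβ hm hx hw (by rwa [← mem_coe, coe_latticeBoxFinset] at hy)
  have hreal : (m : ℝ) ^ d * (β / (m * (S - 1)) ^ (2 * d))
      ≤ β * 4 ^ (2 * d) / (S ^ (2 * d) * (m : ℝ) ^ d) := by
    have hS₁ : S - 1 ≠ 0 := by linarith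
    calc (m : ℝ) ^ d * (β / (m * (S - 1)) ^ (2 * d))
        = β * 4 ^ (2 * d) / ((4 * (S - 1)) ^ (2 * d) * (m : ℝ) ^ d) := by
          rw [mul_pow, mul_pow]
          field_simp
          ring
      _ ≤ β * 4 ^ (2 * d) / (S ^ (2 * d) * (m : ℝ) ^ d) := by gcongr; linarith
  calc P {ω | ∃ y ∈ latticeBox d w m, x ≠ y ∧ ω s(x, y) = true}
      ≤ P (⋃ y ∈ latticeBoxFinset d w m, {ω | ω s(x, y) = true}) := by
        refine measure_mono ?_
        rintro ω ⟨y, hy, -, hopen⟩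
        rw [← coe_latticeBoxFinset, mem_coe] at hy
        exact Set.mem_biUnion hy hopen
    _ ≤ ∑ y ∈ latticeBoxFinset d w m, P {ω | ω s(x, y) = true} :=
        measure_biUnion_finset_le _ _
    _ ≤ #(latticeBoxFinset d w m) • ENNReal.ofReal (β / (m * (S - 1)) ^ (2 * d)) :=
        sum_le_card_nsmul _ _ _ hedge
    _ = ENNReal.ofReal ((m : ℝ) ^ d * (β / (m * (S - 1)) ^ (2 * d))) := by
        rw [card_latticeBoxFinset, nsmul_eq_mul, ENNReal.ofReal_mul (by positivity)]
        norm_cast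
    _ ≤ _ := ENNReal.ofReal_le_ofReal hreal

end

theorem statement4_general (d : ℕ) (β : ℝ) (hβ : 0 ≤ β)
    (P : Measure (PercConfig d)) (hP : IsLRP d β P) :
    (∀ k : ℕ, 2 ≤ k →
      P {ω | ∃ y : Fin d → ℤ, k ≤ supNorm y ∧ ω s(0, y) = true}
        ≤ ENNReal.ofReal (β * 50 ^ d / (k : ℝ) ^ d)) ∧
    (∀ m : ℕ, 1 ≤ m → ∀ x ∈ stdBox d m, ∀ w : Fin d → ℤ, 2 ≤ supNorm w →
      P {ω | ∃ y ∈ latticeBox d w m, x ≠ y ∧ ω s(x, y) = true}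
        ≤ ENNReal.ofReal (β * 4 ^ (2 * d) / ((supNorm w : ℝ) ^ (2 * d) * (m : ℝ) ^ d))) :=
  ⟨fun _ hk => hP.measure_exists_open_edge_far_le hβ hk,
    fun _ hm _ hx _ hw => hP.measure_exists_open_edge_to_latticeBox_le hβ hm hx hw⟩

/-- For all `β ≥ 0`: (i) for `k ≥ 2`, `ℙ_β(0 ∼ S_{≥k}) ≤ β·50^d·k^{−d}`;
(ii) for `m ≥ 1`, `x ∈ V_0^m` and `‖w‖_∞ ≥ 2`, `ℙ_β(x ∼ V_w^m) ≤ β·4^{2d}/(‖w‖_∞^{2d}·m^d)`. -/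
theorem statement4 (d : ℕ) (hd : 1 ≤ d) (β : ℝ) (hβ : 0 ≤ β)
    (P : Measure (PercConfig d)) (hP : IsLRP d β P) :
    (∀ k : ℕ, 2 ≤ k →
      P {ω | ∃ y : Fin d → ℤ, k ≤ supNorm y ∧ ω s(0, y) = true}
        ≤ ENNReal.ofReal (β * 50 ^ d / (k : ℝ) ^ d)) ∧
    (∀ m : ℕ, 1 ≤ m → ∀ x ∈ stdBox d m, ∀ w : Fin d → ℤ, 2 ≤ supNorm w →
      P {ω | ∃ y ∈ latticeBox d w m, x ≠ y ∧ ω s(x, y) = true}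
        ≤ ENNReal.ofReal (β * 4 ^ (2 * d) / ((supNorm w : ℝ) ^ (2 * d) * (m : ℝ) ^ d))) :=
  statement4_general d β hβ P hP
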